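/- The number of distinct reachable stable configurations starting from k^ℓ labeled chips on the root of the infinite directed k-ary tree equals the product ∏_{i=0}^{ℓ−1} (C_{k, k^{ℓ−1−i}})^{k^i}, that is, C_{k,k^{ℓ−1}} · C_{k,k^{ℓ−2}}^{k} · C_{k,k^{ℓ−3}}^{k^2} ⋯ C_{k,k}^{k^{ℓ−2}} · C_{k,1}^{k^{ℓ−1}}. -/

import Mathlib

/-
Track every chip by its path from the root.  At each node, the firings that happened there
split the chips that went through the node into blocks, one chip per child, with labels
increasing with the child index.  Hence, read in the order of labels, the children taken at a
node form a ballot sequence in which all children occur equally often.  In a stable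
configuration fewer than `k` chips stop at a node while the others split evenly among its `k`
children; starting from `k ^ ℓ` chips this forces all chips onto distinct vertices of layer
`ℓ + 1`.  Conversely, every assignment of the chips to distinct vertices of layer `ℓ + 1` whose
children sequences are ballot at every node is reached: fire the root according to its ballot
word, then recurse into the subtrees.  Such an assignment is the same as the ballot word at the
root, an element of `A_{k, k^(ℓ-1)}`, together with `k` assignments for the subtrees, so their
number `a_ℓ` satisfies `a_ℓ = C_{k, k^(ℓ-1)} · a_{ℓ-1} ^ k`.
-/

/-- A firing step for `N` labeled chips on the infinite directed `k`-ary tree with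
vertex set `{1, 2, 3, …}`, root `1`, where the `j`-th child (`1 ≤ j ≤ k`) of vertex `v`
is `k*(v-1)+j+1`.  A configuration assigns to each chip (element of `Fin N`,
representing labels `1,…,N`) a vertex.  A step picks `k` chips `t 0 < t 1 < ⋯ < t (k-1)`
all on a common vertex `v` and sends the `j`-th smallest to the `j`-th child. -/
def FireStep (k N : ℕ) (c c' : Fin N → ℕ) : Prop :=
  ∃ (v : ℕ) (t : Fin k → Fin N),
    StrictMono t ∧
    (∀ j, c (t j) = v) ∧
    (∀ j : Fin k, c' (t j) = k * (v - 1) + (j : ℕ) + 2) ∧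
    (∀ i : Fin N, (∀ j, i ≠ t j) → c' i = c i)

/-- Reachable from the initial configuration of `k^ℓ` chips all on the root. -/
def Reachable (k ℓ : ℕ) (c : Fin (k ^ ℓ) → ℕ) : Prop :=
  Relation.ReflTransGen (FireStep k (k ^ ℓ)) (fun _ => 1) c

/-- A configuration is stable if every vertex holds fewer than `k` chips. -/
def Stable (k N : ℕ) (c : Fin N → ℕ) : Prop :=
  ∀ v : ℕ, (Finset.univ.filter (fun i => c i = v)).card < k

/-- `A_{k,m}` : ballot sequences of length `k*m` with values in `Fin k` (value `j`
representing `j+1 ∈ {1,…,k}`): each value occurs exactly `m` times, and in every prefix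
the number of occurrences of `j` is at least the number of occurrences of `j+1`. -/
def CatalanSet (k m : ℕ) : Set (Fin (k * m) → Fin k) :=
  {a | (∀ v : Fin k, (Finset.univ.filter (fun i => a i = v)).card = m) ∧
    ∀ (p j : ℕ), j + 1 < k →
      (Finset.univ.filter (fun i : Fin (k * m) => (i : ℕ) < p ∧ (a i : ℕ) = j + 1)).card ≤
      (Finset.univ.filter (fun i : Fin (k * m) => (i : ℕ) < p ∧ (a i : ℕ) = j)).card}

open Finset Function

theorem List.prefix_iff_eq_or_concat_prefix {α : Type*} {p l : List α} :
    p <+: l ↔ l = p ∨ ∃ a, p ++ [a] <+: l := by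
  constructor
  · rintro ⟨_ | ⟨a, s⟩, rfl⟩
    · simp
    · exact .inr ⟨a, s, by simp⟩
  · rintro (rfl | ⟨a, h⟩)
    · exact List.prefix_refl _
    · exact (List.prefix_append p [a]).trans h

theorem Nat.eq_zero_and_eq_of_add_mul_eq_mul {k a u M : ℕ} (ha : a < k)
    (h : a + k * u = k * M) : a = 0 ∧ u = M := by
  have ha0 : a = 0 := by
    have := congrArg (· % k) h
    simpa [Nat.add_mul_mod_self_left, Nat.mod_eq_of_lt ha] using this
  subst ha0
  exact ⟨rfl, Nat.eq_of_mul_eq_mul_left (by omega) (by simpa using h)⟩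

/-- The vertex at the end of the path from the root through the children `p`. -/
def vertexOf (k : ℕ) (p : List (Fin k)) : ℕ :=
  p.foldl (fun v j => k * (v - 1) + j + 2) 1

@[simp]
theorem vertexOf_nil (k : ℕ) : vertexOf k [] = 1 := rfl

theorem vertexOf_concat (k : ℕ) (p : List (Fin k)) (j : Fin k) :
    vertexOf k (p ++ [j]) = k * (vertexOf k p - 1) + j + 2 := by
  simp [vertexOf, List.foldl_append]

theorem one_le_vertexOf (k : ℕ) (p : List (Fin k)) : 1 ≤ vertexOf k p := by
  induction p using List.reverseRecOn with
  | nil => simp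
  | append_singleton p j _ => rw [vertexOf_concat]; omega

theorem vertexOf_injective (k : ℕ) : Injective (vertexOf k) := by
  intro p
  induction p using List.reverseRecOn with
  | nil =>
    intro q h
    induction q using List.reverseRecOn with
    | nil => rfl
    | append_singleton q j _ => rw [vertexOf_nil, vertexOf_concat] at h; omega
  | append_singleton p j ih =>
    intro q h
    induction q using List.reverseRecOn with
    | nil => rw [vertexOf_nil, vertexOf_concat] at h; omega
    | append_singleton q j' _ =>
      rw [vertexOf_concat, vertexOf_concat] at h
      have hk : 0 < k := j.pos
      have h' : k * (vertexOf k p - 1) + j = k * (vertexOf k q - 1) + j' := by omega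
      have hdiv := congrArg (· / k) h'
      have hmod := congrArg (· % k) h'
      simp only [Nat.mul_add_div hk, Nat.mul_add_mod, Nat.div_eq_of_lt j.isLt,
        Nat.div_eq_of_lt j'.isLt, Nat.mod_eq_of_lt j.isLt, Nat.mod_eq_of_lt j'.isLt] at hdiv hmod
      have hp := one_le_vertexOf k p
      have hq := one_le_vertexOf k q
      rw [@ih q (by omega), Fin.ext hmod]

/-- `FireStep`, with the chips recorded by their paths from the root. -/
def WordStep (k N : ℕ) (d d' : Fin N → List (Fin k)) : Prop :=
  ∃ (p : List (Fin k)) (t : Fin k → Fin N),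
    StrictMono t ∧ (∀ j, d (t j) = p) ∧ d' = extend t (fun j => p ++ [j]) d

section WordStep

variable {k N : ℕ}

theorem WordStep.fireStep {d d' : Fin N → List (Fin k)} (h : WordStep k N d d') :
    FireStep k N (vertexOf k ∘ d) (vertexOf k ∘ d') := by
  obtain ⟨p, t, ht, hp, rfl⟩ := h
  refine ⟨vertexOf k p, t, ht, fun j => by simp [hp j], fun j => ?_, fun i hi => ?_⟩
  · simp [ht.injective.extend_apply, vertexOf_concat]
  · have hi' : ¬∃ j, t j = i := fun ⟨j, hj⟩ => hi j hj.symm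
    simp [extend_apply' _ _ _ hi']

theorem FireStep.exists_wordStep (hk : 0 < k) {d : Fin N → List (Fin k)} {c : Fin N → ℕ}
    (h : FireStep k N (vertexOf k ∘ d) c) :
    ∃ d', WordStep k N d d' ∧ c = vertexOf k ∘ d' := by
  obtain ⟨v, t, ht, hv, hc, hrest⟩ := h
  set p := d (t ⟨0, hk⟩)
  have hvp : vertexOf k p = v := hv _
  have hp : ∀ j, d (t j) = p := fun j => vertexOf_injective k ((hv j).trans hvp.symm)
  refine ⟨extend t (fun j => p ++ [j]) d, ⟨p, t, ht, hp, rfl⟩, funext fun i => ?_⟩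
  by_cases hi : ∃ j, t j = i
  · obtain ⟨j, rfl⟩ := hi
    simp [ht.injective.extend_apply, vertexOf_concat, hc, hvp]
  · simp only [comp_apply, extend_apply' _ _ _ hi]
    exact hrest i fun j hj => hi ⟨j, hj.symm⟩

theorem reflTransGen_fireStep_iff (hk : 0 < k) {d₀ : Fin N → List (Fin k)} {c : Fin N → ℕ} :
    Relation.ReflTransGen (FireStep k N) (vertexOf k ∘ d₀) c ↔
      ∃ d, Relation.ReflTransGen (WordStep k N) d₀ d ∧ c = vertexOf k ∘ d := by
  constructor
  · intro h
    induction h with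
    | refl => exact ⟨d₀, .refl, rfl⟩
    | tail _ hstep ih =>
      obtain ⟨d, hd, rfl⟩ := ih
      obtain ⟨d', hstep', rfl⟩ := hstep.exists_wordStep hk
      exact ⟨d', hd.tail hstep', rfl⟩
  · rintro ⟨d, h, rfl⟩
    induction h with
    | refl => exact .refl
    | tail _ hstep ih => exact ih.tail hstep.fireStep

theorem stable_comp_vertexOf_iff (hk : 0 < k) {d : Fin N → List (Fin k)} :
    Stable k N (vertexOf k ∘ d) ↔ ∀ p, #{i | d i = p} < k := by
  have hfiber (p : List (Fin k)) : #{i | vertexOf k (d i) = vertexOf k p} = #{i | d i = p} := by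
    simp only [(vertexOf_injective k).eq_iff]
  refine ⟨fun h p => hfiber p ▸ h (vertexOf k p), fun h v => ?_⟩
  by_cases hv : ∃ i, vertexOf k (d i) = v
  · obtain ⟨i, rfl⟩ := hv
    exact hfiber (d i) ▸ h (d i)
  · rw [not_exists] at hv
    simpa [filter_false_of_mem fun i _ => hv i] using hk

end WordStep

section Ballot

variable {k N m : ℕ}

/-- `R i j` reads: chip `i` carries the letter `j` (at a node: chip `i` went on to child `j`). -/
def IsBallot (R : Fin N → Fin k → Prop) [DecidableRel R] : Prop :=
  ∀ (t : ℕ) (j j' : Fin k), j ≤ j' →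
    #{i : Fin N | (i : ℕ) < t ∧ R i j'} ≤ #{i : Fin N | (i : ℕ) < t ∧ R i j}

theorem isBallot_iff_succ {R : Fin N → Fin k → Prop} [DecidableRel R] :
    IsBallot R ↔ ∀ (t j : ℕ) (hj : j + 1 < k),
      #{i : Fin N | (i : ℕ) < t ∧ R i ⟨j + 1, hj⟩} ≤
        #{i : Fin N | (i : ℕ) < t ∧ R i ⟨j, by omega⟩} := by
  refine ⟨fun h t j hj => h t _ _ (Fin.mk_le_mk.mpr j.le_succ), fun h t j j' hjj => ?_⟩
  obtain ⟨n, hn⟩ := Nat.exists_eq_add_of_le hjj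
  induction n generalizing j' with
  | zero => rw [show j' = j from Fin.ext (by omega)]
  | succ n ih =>
    have hlt : (j : ℕ) + n < k := by omega
    calc _ ≤ #{i : Fin N | (i : ℕ) < t ∧ R i ⟨j + n, hlt⟩} := by
          convert h t (j + n) (by omega) using 5; exact Fin.ext (by simp; omega)
      _ ≤ _ := ih ⟨j + n, hlt⟩ (Fin.mk_le_mk.mpr (by omega)) rfl

theorem mem_catalanSet_iff {a : Fin (k * m) → Fin k} :
    a ∈ CatalanSet k m ↔ (∀ v, #{i | a i = v} = m) ∧ IsBallot (fun i j => a i = j) := by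
  simp only [CatalanSet, Set.mem_ofPred_eq, isBallot_iff_succ, Fin.ext_iff]

theorem card_filter_comp_of_mem_range {α β : Type*} [Fintype α] [Fintype β] (e : α ↪ β)
    (P : β → Prop) [DecidablePred P] (hP : ∀ b, P b → b ∈ Set.range e) :
    #{a | P (e a)} = #{b | P b} := by
  rw [← card_map e]
  congr 1
  ext b
  simp only [mem_map, mem_filter, mem_univ, true_and]
  constructor
  · rintro ⟨a, ha, rfl⟩
    exact ha
  · intro hb
    obtain ⟨a, rfl⟩ := hP b hb
    exact ⟨a, hb, rfl⟩

theorem lt_card_filter_iff (e : Fin m ↪o Fin N) (t : ℕ) (x : Fin m) :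
    (x : ℕ) < #{y | (e y : ℕ) < t} ↔ (e x : ℕ) < t := by
  constructor
  · intro hx
    by_contra hxt
    have hsub : ({y | (e y : ℕ) < t} : Finset (Fin m)) ⊆ Iio x := fun y hy => by
      simp only [mem_filter, mem_univ, true_and] at hy
      exact mem_Iio.mpr (e.lt_iff_lt.mp (Fin.lt_def.mpr (by omega)))
    have := card_le_card hsub
    rw [Fin.card_Iio] at this
    omega
  · intro hxt
    have hsub : Iic x ⊆ ({y | (e y : ℕ) < t} : Finset (Fin m)) := fun y hy => by
      simp only [mem_filter, mem_univ, true_and]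
      exact lt_of_le_of_lt (Fin.le_def.mp (e.le_iff_le.mpr (mem_Iic.mp hy))) hxt
    have := card_le_card hsub
    rw [Fin.card_Iic] at this
    omega

theorem exists_lt_iff_apply_lt (e : Fin m ↪o Fin N) (t' : ℕ) :
    ∃ t : ℕ, ∀ x : Fin m, (x : ℕ) < t' ↔ (e x : ℕ) < t := by
  by_cases ht' : t' < m
  · refine ⟨e ⟨t', ht'⟩, fun x => ?_⟩
    rw [← Fin.lt_def, e.lt_iff_lt, Fin.lt_def]
  · exact ⟨N, fun x => by simp only [(e x).isLt, iff_true]; omega⟩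

theorem isBallot_comp_iff (e : Fin m ↪o Fin N) {R : Fin N → Fin k → Prop} [DecidableRel R]
    (hR : ∀ i j, R i j → i ∈ Set.range e) :
    IsBallot (fun x j => R (e x) j) ↔ IsBallot R := by
  have hcard {t' t : ℕ} (hcorr : ∀ x : Fin m, (x : ℕ) < t' ↔ (e x : ℕ) < t) (j : Fin k) :
      #{x : Fin m | (x : ℕ) < t' ∧ R (e x) j} = #{i : Fin N | (i : ℕ) < t ∧ R i j} := by
    simp_rw [hcorr]
    exact card_filter_comp_of_mem_range e.toEmbedding (fun i => (i : ℕ) < t ∧ R i j)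
      fun i hi => hR i j hi.2
  constructor
  · intro h t j j' hjj
    have hcorr := lt_card_filter_iff e t
    rw [← hcard hcorr, ← hcard hcorr]
    exact h _ j j' hjj
  · intro h t' j j' hjj
    obtain ⟨t, hcorr⟩ := exists_lt_iff_apply_lt e t'
    rw [hcard hcorr, hcard hcorr]
    exact h t j j' hjj

end Ballot

section Blocks

variable {k N : ℕ} {R : Fin N → Fin k → Prop}

/-- At a node, `b i` numbers the firing that moved chip `i`. -/
def HasBlocks (R : Fin N → Fin k → Prop) : Prop :=
  ∃ b : Fin N → ℕ,
    (∀ i i' j j', R i j → R i' j' → b i = b i' → (i < i' ↔ j < j')) ∧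
    ∀ i j j', R i j → ∃ i', R i' j' ∧ b i' = b i

theorem hasBlocks_of_forall_not (h : ∀ i j, ¬R i j) : HasBlocks R :=
  ⟨fun _ => 0, fun i _ j _ hi => (h i j hi).elim, fun i j _ hi => (h i j hi).elim⟩

/-- Sending each chip to the chip of its block that carries the letter `j` is injective. -/
theorem HasBlocks.card_filter_le (h : HasBlocks R) (P : Fin N → Prop) [DecidablePred P]
    [DecidableRel R] (j j' : Fin k) (hP : ∀ i i', (i < i' ↔ j' < j) → P i → P i') :
    #{i | P i ∧ R i j'} ≤ #{i | P i ∧ R i j} := by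
  obtain ⟨b, hord, hfull⟩ := h
  choose! mate hmateR hmateb using fun i (hi : R i j') => hfull i j' j hi
  refine card_le_card_of_injOn mate (fun i hi => ?_) fun i hi i' hi' heq => ?_
  · simp only [coe_filter, mem_univ, true_and, Set.mem_ofPred_eq] at hi ⊢
    exact ⟨hP i _ (hord i _ j' j hi.2 (hmateR i hi.2) (hmateb i hi.2).symm) hi.1, hmateR i hi.2⟩
  · simp only [coe_filter, mem_univ, true_and, Set.mem_ofPred_eq] at hi hi'
    have hb : b i = b i' := by rw [← hmateb i hi.2, ← hmateb i' hi'.2, heq]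
    have h1 := hord i i' j' j' hi.2 hi'.2 hb
    have h2 := hord i' i j' j' hi'.2 hi.2 hb.symm
    simp only [lt_self_iff_false, iff_false, not_lt] at h1 h2
    exact le_antisymm h2 h1

theorem HasBlocks.card_eq (h : HasBlocks R) [DecidableRel R] (j j' : Fin k) :
    #{i | R i j} = #{i | R i j'} := by
  have key (j j' : Fin k) : #{i | R i j'} ≤ #{i | R i j} := by
    simpa using h.card_filter_le (fun _ => True) j j' fun _ _ _ _ => trivial
  exact le_antisymm (key j' j) (key j j')

theorem HasBlocks.isBallot (h : HasBlocks R) [DecidableRel R] : IsBallot R := by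
  refine fun t j j' hjj => h.card_filter_le _ j j' fun i i' hii' hi => ?_
  have : i' ≤ i := not_lt.mp fun hlt => (not_lt.mpr hjj) (hii'.mp hlt)
  exact lt_of_le_of_lt (Fin.le_def.mp this) hi

theorem HasBlocks.addBlock (h : HasBlocks R) {t : Fin k → Fin N} (ht : StrictMono t)
    (hfree : ∀ j j', ¬R (t j) j') : HasBlocks fun i j => R i j ∨ t j = i := by
  classical
  obtain ⟨b, hord, hfull⟩ := h
  have hlt (i : Fin N) : b i < univ.sup b + 1 := Nat.lt_succ_of_le (le_sup (mem_univ i))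
  have hmoved (j j₀ : Fin k) : (R (t j₀) j ∨ t j = t j₀) ↔ j = j₀ := by
    simp [hfree, ht.injective.eq_iff]
  have hstay {i : Fin N} (hi : i ∉ Set.range t) (j : Fin k) : (R i j ∨ t j = i) ↔ R i j :=
    or_iff_left fun hj => hi ⟨j, hj⟩
  refine ⟨fun i => if i ∈ Set.range t then univ.sup b + 1 else b i, ?_, ?_⟩
  · intro i i' j j' hi hi' hb
    by_cases hm : i ∈ Set.range t <;> by_cases hm' : i' ∈ Set.range t <;>
      simp only [hm, hm', if_true, if_false] at hb
    · obtain ⟨j₀, rfl⟩ := hm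
      obtain ⟨j₀', rfl⟩ := hm'
      rw [(hmoved j j₀).mp hi, (hmoved j' j₀').mp hi']
      exact ht.lt_iff_lt
    · exact absurd hb (hlt i').ne'
    · exact absurd hb (hlt i).ne
    · exact hord i i' j j' ((hstay hm j).mp hi) ((hstay hm' j').mp hi') hb
  · intro i j j' hi
    by_cases hm : i ∈ Set.range t
    · exact ⟨t j', Or.inr rfl, by simp [hm]⟩
    · obtain ⟨i', hi'R, hb⟩ := hfull i j j' ((hstay hm j).mp hi)
      have hm' : i' ∉ Set.range t := by rintro ⟨j₀, rfl⟩; exact hfree j₀ j' hi'R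
      exact ⟨i', Or.inl hi'R, by simp [hm, hm', hb]⟩

end Blocks

section Words

variable {k N : ℕ}

abbrev BelowChild (d : Fin N → List (Fin k)) (p : List (Fin k)) (i : Fin N) (j : Fin k) : Prop :=
  p ++ [j] <+: d i

theorem belowChild_extend_iff {d : Fin N → List (Fin k)} {q : List (Fin k)} {t : Fin k → Fin N}
    (ht : Injective t) (hq : ∀ j, d (t j) = q) (p : List (Fin k)) (i : Fin N) (j : Fin k) :
    BelowChild (extend t (fun j => q ++ [j]) d) p i j ↔
      BelowChild d p i j ∨ (p = q ∧ t j = i) := by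
  by_cases hi : ∃ j₀, t j₀ = i
  · obtain ⟨j₀, rfl⟩ := hi
    simp [BelowChild, ht.extend_apply, hq, List.prefix_concat_iff, ht.eq_iff, or_comm]
  · have hj : t j ≠ i := fun h => hi ⟨j, h⟩
    simp [BelowChild, extend_apply' _ _ _ hi, hj]

def Blocks (d : Fin N → List (Fin k)) : Prop :=
  ∀ p, HasBlocks (BelowChild d p)

theorem blocks_nil : Blocks fun _ : Fin N => ([] : List (Fin k)) :=
  fun _ => hasBlocks_of_forall_not fun _ _ h => by simpa using h.length_le

theorem WordStep.blocks {d d' : Fin N → List (Fin k)} (h : WordStep k N d d') (hd : Blocks d) :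
    Blocks d' := by
  obtain ⟨q, t, ht, hq, rfl⟩ := h
  intro p
  have hrel := funext₂ fun i j => propext (belowChild_extend_iff ht.injective hq p i j)
  rw [hrel]
  by_cases hp : p = q
  · subst hp
    simp only [true_and]
    refine (hd p).addBlock ht fun j j' hj => ?_
    simpa [BelowChild, hq] using hj.length_le
  · simpa [hp] using hd p

theorem blocks_of_reflTransGen {d : Fin N → List (Fin k)}
    (h : Relation.ReflTransGen (WordStep k N) (fun _ => []) d) : Blocks d := by
  induction h with
  | refl => exact blocks_nil
  | tail _ hstep ih => exact hstep.blocks ih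

theorem HasBlocks.card_prefix_eq {d : Fin N → List (Fin k)} {p : List (Fin k)}
    (hB : HasBlocks (BelowChild d p)) (j : Fin k) :
    #{i | p <+: d i} = #{i | d i = p} + k * #{i | BelowChild d p i j} := by
  classical
  have hsplit : ({i | p <+: d i} : Finset (Fin N)) =
      ({i | d i = p} : Finset (Fin N)) ∪ univ.biUnion fun j => {i | BelowChild d p i j} := by
    ext i
    simp only [mem_filter, mem_union, mem_biUnion, mem_univ, true_and]
    exact List.prefix_iff_eq_or_concat_prefix
  have hdisj : Disjoint ({i | d i = p} : Finset (Fin N))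
      (univ.biUnion fun j => {i | BelowChild d p i j}) := by
    simp only [disjoint_left, mem_filter, mem_univ, true_and, mem_biUnion, not_exists]
    intro i hi j hj
    simpa [hi] using hj.length_le
  have hpair : ((univ : Finset (Fin k)) : Set (Fin k)).PairwiseDisjoint
      fun j => ({i | BelowChild d p i j} : Finset (Fin N)) := by
    intro j _ j' _ hjj'
    simp only [onFun, disjoint_left, mem_filter, mem_univ, true_and]
    intro i hj hj'
    have := List.prefix_of_prefix_length_le hj hj' (by simp)
    simp_all
  rw [hsplit, card_union_of_disjoint hdisj, card_biUnion hpair,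
    sum_congr rfl fun j' _ => hB.card_eq j' j, sum_const, card_univ, Fintype.card_fin, smul_eq_mul]

end Words

section Admissible

variable {k N ℓ : ℕ} {d : Fin N → List (Fin k)}

/-- Chips on distinct vertices of layer `ℓ + 1`, ballot sequences of children at every node:
these are the reachable stable configurations. -/
def IsAdmissible (k ℓ : ℕ) (d : Fin N → List (Fin k)) : Prop :=
  (∀ i, (d i).length = ℓ) ∧ Injective d ∧ ∀ p, IsBallot (BelowChild d p)

theorem IsAdmissible.card_filter_eq_lt (hk : 2 ≤ k) (hd : IsAdmissible k ℓ d)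
    (p : List (Fin k)) : #{i | d i = p} < k :=
  lt_of_le_of_lt (card_le_one.mpr fun i hi i' hi' => by
    simp only [mem_filter, mem_univ, true_and] at hi hi'
    exact hd.2.1 (hi.trans hi'.symm)) hk

/-- Of the chips below `p`, fewer than `k` stop at `p` and the others split evenly among the
`k` children; when `k` divides their number, none stop. -/
theorem Blocks.card_prefix (hB : Blocks d) (hstab : ∀ p, #{i | d i = p} < k) (hN : N = k ^ ℓ)
    (p : List (Fin k)) (hp : p.length ≤ ℓ) : #{i | p <+: d i} = k ^ (ℓ - p.length) := by
  induction p using List.reverseRecOn with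
  | nil => simp [hN]
  | append_singleton p j ih =>
    simp only [List.length_append, List.length_singleton] at hp ⊢
    have h := (hB p).card_prefix_eq j
    rw [ih (by omega), show ℓ - p.length = ℓ - (p.length + 1) + 1 by omega, pow_succ'] at h
    exact (Nat.eq_zero_and_eq_of_add_mul_eq_mul (hstab p) h.symm).2

theorem Blocks.isAdmissible (hk : 2 ≤ k) (hB : Blocks d) (hstab : ∀ p, #{i | d i = p} < k)
    (hN : N = k ^ ℓ) : IsAdmissible k ℓ d := by
  have hdecomp (p : List (Fin k)) (hp : p.length ≤ ℓ) (j : Fin k) :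
      #{i | d i = p} + k * #{i | BelowChild d p i j} = k ^ (ℓ - p.length) :=
    ((hB p).card_prefix_eq j).symm.trans (hB.card_prefix hstab hN p hp)
  have hlen (i : Fin N) : (d i).length = ℓ := by
    rcases lt_trichotomy (d i).length ℓ with hlt | heq | hgt
    · have h := hdecomp (d i) hlt.le ⟨0, by omega⟩
      rw [show ℓ - (d i).length = ℓ - (d i).length - 1 + 1 by omega, pow_succ'] at h
      have hpos : 0 < #{i' | d i' = d i} := card_pos.mpr ⟨i, by simp⟩
      exact absurd (Nat.eq_zero_and_eq_of_add_mul_eq_mul (hstab (d i)) h).1 hpos.ne'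
    · exact heq
    · have hbelow : BelowChild d ((d i).take ℓ) i (d i)[ℓ] := by
        rw [BelowChild, List.take_concat_get' _ _ hgt]
        exact List.take_prefix _ _
      have h := hdecomp ((d i).take ℓ) (by simp) (d i)[ℓ]
      have hpos : 0 < #{i' | BelowChild d ((d i).take ℓ) i' (d i)[ℓ]} :=
        card_pos.mpr ⟨i, by simpa using hbelow⟩
      simp only [List.length_take, min_eq_left hgt.le, Nat.sub_self, pow_zero] at h
      nlinarith
  refine ⟨hlen, fun i i' h => ?_, fun p => (hB p).isBallot⟩
  have hone := hB.card_prefix hstab hN (d i) (hlen i).le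
  rw [hlen i, Nat.sub_self, pow_zero] at hone
  exact card_le_one.mp hone.le i (by simp) i' (by simp [h])

end Admissible

section Fibers

variable {k N m : ℕ} (w : Fin N → Fin k) (hw : ∀ j, #{i | w i = j} = m)

def fiberEmb (j : Fin k) : Fin m ↪o Fin N :=
  ({i | w i = j} : Finset (Fin N)).orderEmbOfFin (hw j)

theorem apply_fiberEmb (j : Fin k) (x : Fin m) : w (fiberEmb w hw j x) = j :=
  (mem_filter.mp (orderEmbOfFin_mem _ (hw j) x)).2

theorem range_fiberEmb (j : Fin k) : Set.range (fiberEmb w hw j) = {i | w i = j} := by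
  simp [fiberEmb, range_orderEmbOfFin]

theorem fiberEmb_congr {w' : Fin N → Fin k} (h : w = w') (hw' : ∀ j, #{i | w' i = j} = m)
    (j : Fin k) (x : Fin m) : fiberEmb w hw j x = fiberEmb w' hw' j x := by
  subst h
  rfl

noncomputable def fiberEquiv : Fin k × Fin m ≃ Fin N :=
  Equiv.ofBijective (fun jx : Fin k × Fin m => fiberEmb w hw jx.1 jx.2) <| by
    refine ⟨fun ⟨j, x⟩ ⟨j', x'⟩ h => ?_, fun i => ?_⟩
    · have hj : j = j' := by simpa only [apply_fiberEmb] using congrArg w h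
      subst hj
      simp only at h
      rw [(fiberEmb w hw j).injective h]
    · obtain ⟨x, hx⟩ : i ∈ Set.range (fiberEmb w hw (w i)) := by simp [range_fiberEmb]
      exact ⟨(w i, x), hx⟩

@[simp]
theorem fiberEquiv_apply (j : Fin k) (x : Fin m) : fiberEquiv w hw (j, x) = fiberEmb w hw j x :=
  rfl

/-- The configuration whose paths start with the letters `w`, the chips of each fiber of `w`
continuing, in the order of labels, along the paths `f j`. -/
noncomputable def glue (f : Fin k → Fin m → List (Fin k)) (i : Fin N) : List (Fin k) :=
  ((fiberEquiv w hw).symm i).1 :: f ((fiberEquiv w hw).symm i).1 ((fiberEquiv w hw).symm i).2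

variable {w hw} {f : Fin k → Fin m → List (Fin k)}

theorem glue_ne_nil (i : Fin N) : glue w hw f i ≠ [] :=
  List.cons_ne_nil _ _

@[simp]
theorem glue_fiberEmb (j : Fin k) (x : Fin m) :
    glue w hw f (fiberEmb w hw j x) = j :: f j x := by
  simp [glue, ← fiberEquiv_apply]

theorem glue_update (j : Fin k) (g : Fin m → List (Fin k)) :
    extend (fiberEmb w hw j) (fun x => j :: g x) (glue w hw f) = glue w hw (update f j g) := by
  funext i
  obtain ⟨⟨j₀, x⟩, rfl⟩ := (fiberEquiv w hw).surjective i
  rw [fiberEquiv_apply, glue_fiberEmb]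
  by_cases hj : j₀ = j
  · subst hj
    simp [(fiberEmb w hw j₀).injective.extend_apply]
  · rw [extend_apply', glue_fiberEmb, update_of_ne hj]
    rintro ⟨x', hx'⟩
    exact hj (by simpa only [apply_fiberEmb] using (congrArg w hx').symm)

theorem belowChild_glue_nil_iff (i : Fin N) (j : Fin k) :
    BelowChild (glue w hw f) [] i j ↔ w i = j := by
  obtain ⟨⟨j₀, x⟩, rfl⟩ := (fiberEquiv w hw).surjective i
  simp [BelowChild, apply_fiberEmb, eq_comm]

theorem belowChild_glue_cons_iff (j : Fin k) (q : List (Fin k)) (x : Fin m) (j' : Fin k) :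
    BelowChild (glue w hw f) (j :: q) (fiberEmb w hw j x) j' ↔ BelowChild (f j) q x j' := by
  simp [BelowChild]

theorem mem_range_of_belowChild_glue {j : Fin k} {q : List (Fin k)} {i : Fin N} {j' : Fin k}
    (h : BelowChild (glue w hw f) (j :: q) i j') : i ∈ Set.range (fiberEmb w hw j) := by
  obtain ⟨⟨j₀, x⟩, rfl⟩ := (fiberEquiv w hw).surjective i
  simp only [BelowChild, fiberEquiv_apply, glue_fiberEmb, List.cons_append,
    List.cons_prefix_cons] at h
  rw [h.1]
  exact ⟨x, rfl⟩

end Fibers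

section Glue

variable {k N m ℓ : ℕ} {w : Fin N → Fin k} {hw : ∀ j, #{i | w i = j} = m}
  {f : Fin k → Fin m → List (Fin k)}

theorem isAdmissible_glue_iff :
    IsAdmissible k (ℓ + 1) (glue w hw f) ↔
      IsBallot (fun i j => w i = j) ∧ ∀ j, IsAdmissible k ℓ (f j) := by
  have hlen : (∀ i, (glue w hw f i).length = ℓ + 1) ↔ ∀ j x, (f j x).length = ℓ := by
    simp [(fiberEquiv w hw).surjective.forall]
  have hinj : Injective (glue w hw f) ↔ ∀ j, Injective (f j) := by
    rw [← (fiberEquiv w hw).injective_comp]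
    refine ⟨fun h j x x' hxx' => ?_, fun h ⟨j, x⟩ ⟨j', x'⟩ hjx => ?_⟩
    · simpa using @h (j, x) (j, x') (by simp [hxx'])
    · simp only [comp_apply, fiberEquiv_apply, glue_fiberEmb, List.cons.injEq] at hjx
      obtain ⟨rfl, hx⟩ := hjx
      rw [h j hx]
  have hnil : IsBallot (BelowChild (glue w hw f) []) ↔ IsBallot (fun i j => w i = j) := by
    simp only [IsBallot, belowChild_glue_nil_iff]
  have hcons (j : Fin k) (q : List (Fin k)) :
      IsBallot (BelowChild (glue w hw f) (j :: q)) ↔ IsBallot (BelowChild (f j) q) := by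
    rw [← isBallot_comp_iff (fiberEmb w hw j) fun i _ => mem_range_of_belowChild_glue]
    simp only [belowChild_glue_cons_iff]
  have hballot : (∀ p, IsBallot (BelowChild (glue w hw f) p)) ↔
      IsBallot (fun i j => w i = j) ∧ ∀ j q, IsBallot (BelowChild (f j) q) := by
    refine ⟨fun h => ⟨hnil.mp (h []), fun j q => (hcons j q).mp (h _)⟩, fun h p => ?_⟩
    cases p with
    | nil => exact hnil.mpr h.1
    | cons j q => exact (hcons j q).mpr (h.2 j q)
  simp only [IsAdmissible, hlen, hinj, hballot]
  constructor
  · exact fun ⟨hl, hi, hb, hq⟩ => ⟨hb, fun j => ⟨hl j, hi j, hq j⟩⟩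
  · exact fun ⟨hb, h⟩ => ⟨fun j => (h j).1, fun j => (h j).2.1, hb, fun j => (h j).2.2⟩

end Glue

section Split

variable {k N m ℓ : ℕ} {d : Fin N → List (Fin k)}

def headLetter (d : Fin N → List (Fin k)) (hd : ∀ i, d i ≠ []) (i : Fin N) : Fin k :=
  (d i).head (hd i)

theorem IsAdmissible.ne_nil (hd : IsAdmissible k (ℓ + 1) d) (i : Fin N) : d i ≠ [] :=
  List.ne_nil_of_length_pos (by rw [hd.1 i]; omega)

theorem eq_glue_headLetter (hd : ∀ i, d i ≠ []) (hw : ∀ j, #{i | headLetter d hd i = j} = m) :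
    d = glue (headLetter d hd) hw fun j x => (d (fiberEmb _ hw j x)).tail := by
  funext i
  obtain ⟨⟨j, x⟩, rfl⟩ := (fiberEquiv _ hw).surjective i
  rw [fiberEquiv_apply, glue_fiberEmb, ← List.cons_head_tail (hd _)]
  exact congrArg (· :: _) (apply_fiberEmb _ hw j x)

theorem IsAdmissible.card_headLetter (hd : IsAdmissible k (ℓ + 1) d) (hN : N = k * k ^ ℓ)
    (j : Fin k) : #{i | headLetter d hd.ne_nil i = j} = k ^ ℓ := by
  set w := headLetter d hd.ne_nil
  have hle (j : Fin k) : #{i | w i = j} ≤ k ^ ℓ := by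
    have hcons (i : Fin N) : d i = w i :: (d i).tail := (List.cons_head_tail _).symm
    have := Fintype.card_le_of_injective (β := List.Vector (Fin k) ℓ)
      (fun i : {i // w i = j} => ⟨(d i).tail, by simp [hd.1 i]⟩) fun i i' h => by
        refine Subtype.ext (hd.2.1 ?_)
        rw [hcons i, hcons i', i.2, i'.2]
        exact congrArg (j :: ·) (congrArg Subtype.val h)
    simpa [Fintype.card_subtype, card_vector] using this
  have hsum : ∑ j, #{i | w i = j} = ∑ _j : Fin k, k ^ ℓ := by
    rw [← card_eq_sum_card_fiberwise fun i _ => mem_univ (w i)]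
    simp [hN]
  exact (sum_eq_sum_iff_of_le fun j _ => hle j).mp hsum j (mem_univ j)

end Split

section Realization

variable {k N m : ℕ}

theorem WordStep.lift (e : Fin m ↪o Fin N) (p₀ : List (Fin k)) (g : Fin N → List (Fin k))
    {d d' : Fin m → List (Fin k)} (h : WordStep k m d d') :
    WordStep k N (extend e (fun x => p₀ ++ d x) g) (extend e (fun x => p₀ ++ d' x) g) := by
  obtain ⟨q, t, ht, hq, rfl⟩ := h
  refine ⟨p₀ ++ q, e ∘ t, e.strictMono.comp ht,
    fun j => by simp [e.injective.extend_apply, hq], funext fun i => ?_⟩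
  have het : Injective (e ∘ t) := e.injective.comp ht.injective
  by_cases hi : ∃ x, e x = i
  · obtain ⟨x, rfl⟩ := hi
    by_cases hx : ∃ j, t j = x
    · obtain ⟨j, rfl⟩ := hx
      rw [e.injective.extend_apply, ht.injective.extend_apply, ← comp_apply (f := e),
        het.extend_apply, List.append_assoc]
    · rw [e.injective.extend_apply, extend_apply' _ _ _ hx, extend_apply',
        e.injective.extend_apply]
      rintro ⟨j, hj⟩
      exact hx ⟨j, e.injective hj⟩
  · have hi' : ¬∃ j, (e ∘ t) j = i := fun ⟨j, hj⟩ => hi ⟨t j, hj⟩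
    rw [extend_apply' _ _ _ hi, extend_apply' _ _ _ hi', extend_apply' _ _ _ hi]

theorem Relation.ReflTransGen.lift_wordStep (e : Fin m ↪o Fin N) (p₀ : List (Fin k))
    (g : Fin N → List (Fin k)) {d d' : Fin m → List (Fin k)}
    (h : Relation.ReflTransGen (WordStep k m) d d') :
    Relation.ReflTransGen (WordStep k N)
      (extend e (fun x => p₀ ++ d x) g) (extend e (fun x => p₀ ++ d' x) g) := by
  induction h with
  | refl => exact .refl
  | tail _ hstep ih => exact ih.tail (hstep.lift e p₀ g)

variable {w : Fin N → Fin k}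

theorem lt_card_filter_iff_fiberEmb_lt (hw : ∀ j, #{i | w i = j} = m) (j : Fin k) (x : Fin m)
    (t : ℕ) :
    (x : ℕ) < #{i : Fin N | (i : ℕ) < t ∧ w i = j} ↔ (fiberEmb w hw j x : ℕ) < t := by
  rw [← lt_card_filter_iff, ← card_filter_comp_of_mem_range (fiberEmb w hw j).toEmbedding
    (fun i => (i : ℕ) < t ∧ w i = j) fun i hi => by simp [range_fiberEmb, hi.2]]
  simp [apply_fiberEmb]

theorem IsBallot.strictMono_fiberEmb {hw : ∀ j, #{i | w i = j} = m}
    (hb : IsBallot fun i j => w i = j) (x : Fin m) :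
    StrictMono fun j => fiberEmb w hw j x := by
  intro j j' hjj'
  have hlt : (x : ℕ) < #{i : Fin N | (i : ℕ) < fiberEmb w hw j' x + 1 ∧ w i = j} :=
    lt_of_lt_of_le ((lt_card_filter_iff_fiberEmb_lt hw j' x _).mpr (Nat.lt_succ_self _))
      (hb _ j j' hjj'.le)
  have hle := Nat.lt_succ_iff.mp ((lt_card_filter_iff_fiberEmb_lt hw j x _).mp hlt)
  refine lt_of_le_of_ne (Fin.le_def.mpr hle) fun h => hjj'.ne ?_
  simpa only [apply_fiberEmb] using congrArg w h

/-- Fire the root `m` times, the `x`-th time with the `x`-th occurrences of all letters. -/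
theorem IsBallot.reflTransGen_wordStep (hw : ∀ j, #{i | w i = j} = m)
    (hb : IsBallot fun i j => w i = j) :
    Relation.ReflTransGen (WordStep k N) (fun _ => []) fun i => [w i] := by
  let rounds (n : ℕ) (i : Fin N) : List (Fin k) :=
    if (((fiberEquiv w hw).symm i).2 : ℕ) < n then [w i] else []
  have hrounds (n : ℕ) (j : Fin k) (x : Fin m) :
      rounds n (fiberEmb w hw j x) = if (x : ℕ) < n then [j] else [] := by
    simp only [rounds, ← fiberEquiv_apply, Equiv.symm_apply_apply]
    rw [fiberEquiv_apply, apply_fiberEmb w hw j x]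
  have hstep (n : ℕ) (hn : n < m) : WordStep k N (rounds n) (rounds (n + 1)) := by
    refine ⟨[], fun j => fiberEmb w hw j ⟨n, hn⟩, hb.strictMono_fiberEmb _,
      fun j => by simp [hrounds], funext fun i => ?_⟩
    obtain ⟨⟨j, x⟩, rfl⟩ := (fiberEquiv w hw).surjective i
    rw [fiberEquiv_apply, hrounds]
    by_cases hx : (x : ℕ) = n
    · obtain rfl : x = ⟨n, hn⟩ := Fin.ext hx
      rw [(hb.strictMono_fiberEmb _).injective.extend_apply]
      simp
    · rw [extend_apply' _ _ _ ?_, hrounds]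
      · simp only [show (x : ℕ) < n + 1 ↔ (x : ℕ) < n by omega]
      rintro ⟨j', hj'⟩
      have hj : j' = j := by simpa only [apply_fiberEmb] using congrArg w hj'
      subst hj
      exact hx (congrArg Fin.val ((fiberEmb w hw j').injective hj')).symm
  have hreach (n : ℕ) (hn : n ≤ m) :
      Relation.ReflTransGen (WordStep k N) (rounds 0) (rounds n) := by
    induction n with
    | zero => exact .refl
    | succ n ih => exact (ih (by omega)).tail (hstep n hn)
  convert hreach m le_rfl using 1
  · funext i
    simp [rounds]
  · funext i
    simp [rounds]

theorem glue_nil {k N m : ℕ} {w : Fin N → Fin k} (hw : ∀ j, #{i | w i = j} = m) :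
    glue w hw (fun _ _ => []) = fun i => [w i] := by
  funext i
  obtain ⟨⟨j, x⟩, rfl⟩ := (fiberEquiv w hw).surjective i
  simp [apply_fiberEmb]

/-- Fire the root until its chips have moved to the children as prescribed by the ballot word of
first letters, then realize the configurations of the subtrees one after the other. -/
theorem IsAdmissible.reflTransGen {k ℓ N : ℕ} {d : Fin N → List (Fin k)} (hN : N = k ^ ℓ)
    (hd : IsAdmissible k ℓ d) : Relation.ReflTransGen (WordStep k N) (fun _ => []) d := by
  induction ℓ generalizing N with
  | zero =>
    obtain rfl : d = fun _ => [] := funext fun i => List.eq_nil_of_length_eq_zero (hd.1 i)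
    exact .refl
  | succ ℓ ih =>
    set w := headLetter d hd.ne_nil
    have hw := hd.card_headLetter (hN.trans (pow_succ' k ℓ))
    set f := fun j x => (d (fiberEmb w hw j x)).tail
    have hglue : d = glue w hw f := eq_glue_headLetter _ hw
    obtain ⟨hb, hf⟩ := isAdmissible_glue_iff.mp (hglue ▸ hd)
    let first (a : ℕ) (j : Fin k) : Fin (k ^ ℓ) → List (Fin k) :=
      if (j : ℕ) < a then f j else fun _ => []
    have hfirst_succ (a : ℕ) (ha : a < k) :
        first (a + 1) = update (first a) ⟨a, ha⟩ (f ⟨a, ha⟩) := by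
      funext j
      by_cases hj : j = ⟨a, ha⟩
      · simp [first, hj]
      · have hja : (j : ℕ) ≠ a := fun h => hj (Fin.ext h)
        simp only [first, update_of_ne hj, show (j : ℕ) < a + 1 ↔ (j : ℕ) < a by omega]
    have hfirst_self (a : ℕ) (ha : a < k) :
        update (first a) ⟨a, ha⟩ (fun _ => []) = first a :=
      update_eq_self_iff.mpr (by simp [first])
    have hphase (a : ℕ) (ha : a ≤ k) :
        Relation.ReflTransGen (WordStep k N) (fun _ => []) (glue w hw (first a)) := by
      induction a with
      | zero => simpa [first, glue_nil] using hb.reflTransGen_wordStep hw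
      | succ a iha =>
        have hpath := (ih rfl (hf ⟨a, ha⟩)).lift_wordStep (fiberEmb w hw ⟨a, ha⟩)
          [⟨a, ha⟩] (glue w hw (first a))
        simp only [List.singleton_append, glue_update] at hpath
        rw [← hfirst_succ a ha, hfirst_self a ha] at hpath
        exact (iha (by omega)).trans hpath
    simpa [first, hglue] using hphase k le_rfl

end Realization

section Counting

theorem headLetter_glue {k N m : ℕ} {w : Fin N → Fin k} {hw : ∀ j, #{i | w i = j} = m}
    {f : Fin k → Fin m → List (Fin k)} : headLetter (glue w hw f) glue_ne_nil = w := by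
  funext i
  obtain ⟨⟨j, x⟩, rfl⟩ := (fiberEquiv w hw).surjective i
  simp [headLetter, apply_fiberEmb]

noncomputable def admissibleEquiv (k ℓ : ℕ) :
    {d : Fin (k * k ^ ℓ) → List (Fin k) // IsAdmissible k (ℓ + 1) d} ≃
      CatalanSet k (k ^ ℓ) ×
        (Fin k → {d : Fin (k ^ ℓ) → List (Fin k) // IsAdmissible k ℓ d}) where
  toFun d :=
    have hw := d.2.card_headLetter rfl
    have hsplit := isAdmissible_glue_iff.mp (eq_glue_headLetter d.2.ne_nil hw ▸ d.2)
    (⟨headLetter d.1 d.2.ne_nil, mem_catalanSet_iff.mpr ⟨hw, hsplit.1⟩⟩,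
      fun j => ⟨fun x => (d.1 (fiberEmb _ hw j x)).tail, hsplit.2 j⟩)
  invFun wf :=
    have hw := mem_catalanSet_iff.mp wf.1.2
    ⟨glue wf.1.1 hw.1 fun j => (wf.2 j).1,
      isAdmissible_glue_iff.mpr ⟨hw.2, fun j => (wf.2 j).2⟩⟩
  left_inv d := Subtype.ext (eq_glue_headLetter d.2.ne_nil _).symm
  right_inv := by
    rintro ⟨⟨w, hw⟩, f⟩
    have hhead := headLetter_glue (w := w) (hw := (mem_catalanSet_iff.mp hw).1)
      (f := fun j => (f j).1)
    refine Prod.ext (Subtype.ext hhead) (funext fun j => Subtype.ext (funext fun x => ?_))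
    simp only
    rw [fiberEmb_congr _ _ hhead (mem_catalanSet_iff.mp hw).1, glue_fiberEmb, List.tail_cons]

theorem isAdmissible_nil {k N : ℕ} (hN : N = 1) : IsAdmissible k 0 fun _ : Fin N => [] :=
  ⟨fun _ => rfl, fun i i' _ => Fin.ext (by omega), fun p => (blocks_nil p).isBallot⟩

theorem card_isAdmissible (k ℓ : ℕ) :
    Nat.card {d : Fin (k ^ ℓ) → List (Fin k) // IsAdmissible k ℓ d} =
      ∏ i ∈ range ℓ, (CatalanSet k (k ^ (ℓ - 1 - i))).ncard ^ k ^ i := by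
  induction ℓ with
  | zero =>
    refine Nat.card_eq_one_iff_exists.mpr ⟨⟨_, isAdmissible_nil (pow_zero k)⟩, fun d => ?_⟩
    exact Subtype.ext (funext fun i => List.eq_nil_of_length_eq_zero (d.2.1 i))
  | succ ℓ ih =>
    rw [pow_succ', Nat.card_congr (admissibleEquiv k ℓ), Nat.card_prod, Nat.card_fun, ih,
      Nat.card_coe_set_eq, Nat.card_eq_fintype_card, Fintype.card_fin, prod_range_succ',
      ← prod_pow]
    simp only [Nat.sub_zero, pow_zero, pow_one, ← pow_mul, ← pow_succ]
    rw [mul_comm, Nat.add_sub_cancel]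
    congr 1
    refine prod_congr rfl fun i _ => ?_
    rw [show ℓ - 1 - i = ℓ - (i + 1) by omega]

end Counting

theorem reachable_and_stable_iff {k ℓ : ℕ} (hk : 2 ≤ k) (c : Fin (k ^ ℓ) → ℕ) :
    Reachable k ℓ c ∧ Stable k (k ^ ℓ) c ↔ ∃ d, IsAdmissible k ℓ d ∧ vertexOf k ∘ d = c := by
  have hk0 : 0 < k := by omega
  constructor
  · rintro ⟨hreach, hstab⟩
    obtain ⟨d, hd, rfl⟩ := (reflTransGen_fireStep_iff hk0 (d₀ := fun _ => [])).mp hreach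
    exact ⟨d, (blocks_of_reflTransGen hd).isAdmissible hk
      ((stable_comp_vertexOf_iff hk0).mp hstab) rfl, rfl⟩
  · rintro ⟨d, hd, rfl⟩
    exact ⟨(reflTransGen_fireStep_iff hk0).mpr ⟨d, hd.reflTransGen rfl, rfl⟩,
      (stable_comp_vertexOf_iff hk0).mpr (hd.card_filter_eq_lt hk)⟩

theorem stmt3 (k ℓ : ℕ) (hk : 2 ≤ k) :
    {c : Fin (k ^ ℓ) → ℕ | Reachable k ℓ c ∧ Stable k (k ^ ℓ) c}.ncard =
      ∏ i ∈ Finset.range ℓ, (CatalanSet k (k ^ (ℓ - 1 - i))).ncard ^ k ^ i := by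
  have hset : {c : Fin (k ^ ℓ) → ℕ | Reachable k ℓ c ∧ Stable k (k ^ ℓ) c} =
      (vertexOf k ∘ ·) '' {d | IsAdmissible k ℓ d} :=
    Set.ext (reachable_and_stable_iff hk)
  have hinj : Injective (vertexOf k ∘ · : (Fin (k ^ ℓ) → List (Fin k)) → _) :=
    fun d d' h => funext fun i => vertexOf_injective k (congrFun h i)
  rw [hset, Set.ncard_image_of_injective _ hinj, ← Nat.card_coe_set_eq]
  exact card_isAdmissible k ℓ
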